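/- If t ∈ (0,1) and p = t·p_l + (1−t)·p_r for probability vectors p_l, p_r, then the Gini impurity decrease G(p) − t·G(p_l) − (1−t)·G(p_r) equals t(1−t)·Σ_i (p_l_i − p_r_i)², and hence is zero if and only if p_l = p_r. -/

import Mathlib

/-! The square of a convex combination falls short of the convex combination of the squares by
`t (1 - t) (a - b)²`; summing over classes gives the formula, and the decrease vanishes exactly when
this sum of squares does. -/

open Finset

section

variable {ι R : Type*} [Fintype ι]

def giniImpurity [CommRing R] (q : ι → R) : R :=
  1 - ∑ i, q i ^ 2

theorem sq_convexCombination [CommRing R] (t a b : R) :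
    (t * a + (1 - t) * b) ^ 2 = t * a ^ 2 + (1 - t) * b ^ 2 - t * (1 - t) * (a - b) ^ 2 := by
  ring

theorem sum_sq_convexCombination [CommRing R] (t : R) (a b : ι → R) :
    ∑ i, (t * a i + (1 - t) * b i) ^ 2
      = t * ∑ i, a i ^ 2 + (1 - t) * ∑ i, b i ^ 2 - t * (1 - t) * ∑ i, (a i - b i) ^ 2 := by
  simp only [sq_convexCombination, sum_sub_distrib, sum_add_distrib, mul_sum]

theorem giniImpurity_convexCombination_decrease [CommRing R] (t : R) (a b : ι → R) :
    giniImpurity (fun i ↦ t * a i + (1 - t) * b i) - t * giniImpurity a - (1 - t) * giniImpurity b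
      = t * (1 - t) * ∑ i, (a i - b i) ^ 2 := by
  rw [giniImpurity, sum_sq_convexCombination, giniImpurity, giniImpurity]
  ring

theorem sum_sq_sub_eq_zero_iff [CommRing R] [LinearOrder R] [IsStrictOrderedRing R]
    (a b : ι → R) : ∑ i, (a i - b i) ^ 2 = 0 ↔ a = b := by
  rw [sum_eq_zero_iff_of_nonneg fun i _ ↦ sq_nonneg (a i - b i), funext_iff]
  simp only [mem_univ, true_implies, sq_eq_zero_iff, sub_eq_zero]

end

theorem gini_decrease_formula_general (K : ℕ) (p pl pr : Fin K → ℝ) (t : ℝ)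
    (ht : 0 < t ∧ t < 1)
    (hp : ∀ i, p i = t * pl i + (1 - t) * pr i) :
    (1 - ∑ i, (p i) ^ 2) - t * (1 - ∑ i, (pl i) ^ 2) - (1 - t) * (1 - ∑ i, (pr i) ^ 2)
      = t * (1 - t) * ∑ i, (pl i - pr i) ^ 2 ∧
    ((1 - ∑ i, (p i) ^ 2) - t * (1 - ∑ i, (pl i) ^ 2) - (1 - t) * (1 - ∑ i, (pr i) ^ 2) = 0
      ↔ pl = pr) := by
  have hformula : giniImpurity p - t * giniImpurity pl - (1 - t) * giniImpurity pr
      = t * (1 - t) * ∑ i, (pl i - pr i) ^ 2 := by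
    rw [funext hp, giniImpurity_convexCombination_decrease]
  unfold giniImpurity at hformula
  have hweight : t * (1 - t) ≠ 0 := mul_ne_zero ht.1.ne' (sub_ne_zero.mpr ht.2.ne')
  refine ⟨hformula, ?_⟩
  rw [hformula, mul_eq_zero, or_iff_right hweight, sum_sq_sub_eq_zero_iff]

theorem gini_decrease_formula (K : ℕ) (p pl pr : Fin K → ℝ) (t : ℝ)
    (ht : 0 < t ∧ t < 1)
    (hpl : (∀ i, 0 ≤ pl i) ∧ ∑ i, pl i = 1)
    (hpr : (∀ i, 0 ≤ pr i) ∧ ∑ i, pr i = 1)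
    (hp : ∀ i, p i = t * pl i + (1 - t) * pr i) :
    (1 - ∑ i, (p i) ^ 2) - t * (1 - ∑ i, (pl i) ^ 2) - (1 - t) * (1 - ∑ i, (pr i) ^ 2)
      = t * (1 - t) * ∑ i, (pl i - pr i) ^ 2 ∧
    ((1 - ∑ i, (p i) ^ 2) - t * (1 - ∑ i, (pl i) ^ 2) - (1 - t) * (1 - ∑ i, (pr i) ^ 2) = 0
      ↔ pl = pr) :=
  gini_decrease_formula_general K p pl pr t ht hp
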